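/- If S is a geodetic set of G ⊠ H, then the projection of S onto G is a geodetic set of G or the projection of S onto H is a geodetic set of H. -/

import Mathlib

open SimpleGraph

/-- The strong product of two simple graphs. -/
def strongProd {α β : Type*} (G : SimpleGraph α) (H : SimpleGraph β) :
    SimpleGraph (α × β) where
  Adj x y := x ≠ y ∧ (x.1 = y.1 ∨ G.Adj x.1 y.1) ∧ (x.2 = y.2 ∨ H.Adj x.2 y.2)
  symm := by
    constructor
    rintro x y ⟨hne, h1, h2⟩
    exact ⟨hne.symm, h1.imp Eq.symm G.adj_symm, h2.imp Eq.symm H.adj_symm⟩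
  loopless := by constructor; rintro x ⟨hne, -, -⟩; exact hne rfl

/-- The closed geodesic interval between two vertices. -/
def interval {V : Type*} (G : SimpleGraph V) (u v : V) : Set V :=
  {w | G.dist u w + G.dist w v = G.dist u v}

/-- The geodetic closure of a set of vertices. -/
def intervalSet {V : Type*} (G : SimpleGraph V) (S : Set V) : Set V :=
  ⋃ u ∈ S, ⋃ v ∈ S, interval G u v

/-- A set is geodetic if its geodetic closure is the whole vertex set. -/
def IsGeodetic {V : Type*} (G : SimpleGraph V) (S : Set V) : Prop :=
  intervalSet G S = Set.univ

/-- A set is a hull set if iterating the interval operator yields everything. -/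
def IsHullSet {V : Type*} (G : SimpleGraph V) (S : Set V) : Prop :=
  ∃ r : ℕ, (intervalSet G)^[r] S = Set.univ

/-- The geodetic number. -/
noncomputable def geodeticNumber {V : Type*} (G : SimpleGraph V) : ℕ :=
  sInf {n : ℕ | ∃ S : Set V, S.ncard = n ∧ IsGeodetic G S}

/-- The hull number. -/
noncomputable def hullNumber {V : Type*} (G : SimpleGraph V) : ℕ :=
  sInf {n : ℕ | ∃ S : Set V, S.ncard = n ∧ IsHullSet G S}

/-- A vertex is simplicial if its neighborhood induces a complete graph. -/
def IsSimplicial {V : Type*} (G : SimpleGraph V) (v : V) : Prop :=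
  ∀ ⦃a b : V⦄, G.Adj v a → G.Adj v b → a ≠ b → G.Adj a b


/-!
Distances in `G ⊠ H` are the maxima of the coordinate distances. Hence if `w` lies on a
geodesic from `u` to `v`, then the coordinate realising `max (d_G(u₁, v₁), d_H(u₂, v₂))` lies on
a geodesic in its factor. So if some `g` lies in no `G`-interval between projections of `S`,
covering every `(g, h)` by an interval of `S` puts every `h` in an `H`-interval between
projections of `S`.
-/

namespace SimpleGraph

variable {V W : Type*} {G : SimpleGraph V} {G' : SimpleGraph W}

lemma edist_map_le_of_adj {f : V → W} (hf : ∀ ⦃x y⦄, G.Adj x y → G'.edist (f x) (f y) ≤ 1)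
    (u v : V) : G'.edist (f u) (f v) ≤ G.edist u v := by
  by_cases h : G.Reachable u v
  · obtain ⟨p, hp⟩ := h.exists_walk_length_eq_edist
    rw [← hp]
    clear hp h
    induction p with
    | nil => simp
    | cons hadj p ih =>
      calc G'.edist (f _) (f _) ≤ G'.edist (f _) (f _) + G'.edist (f _) (f _) :=
            G'.edist_triangle
        _ ≤ 1 + p.length := add_le_add (hf hadj) ih
        _ = (p.cons hadj).length := by rw [Walk.length_cons, add_comm, Nat.cast_succ]
  · simp [edist_eq_top_of_not_reachable h]

lemma exists_eq_or_adj_edist_le {u v : V} {n : ℕ} (h : G.edist u v ≤ n + 1) :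
    ∃ w, (u = w ∨ G.Adj u w) ∧ G.edist w v ≤ n := by
  obtain rfl | hne := eq_or_ne u v
  · exact ⟨u, .inl rfl, by simp⟩
  have hr : G.Reachable u v := reachable_of_edist_ne_top (h.trans_lt (by simp)).ne
  obtain ⟨p, hp⟩ := hr.exists_walk_length_eq_edist
  cases p with
  | nil => exact absurd rfl hne
  | cons hadj q =>
    refine ⟨_, .inr hadj, q.edist_le.trans ?_⟩
    rw [← hp, Walk.length_cons] at h
    have hq : q.length + 1 ≤ n + 1 := by exact_mod_cast h
    exact_mod_cast Nat.le_of_succ_le_succ hq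

end SimpleGraph

lemma mem_intervalSet_iff {V : Type*} {G : SimpleGraph V} {S : Set V} {w : V} :
    w ∈ intervalSet G S ↔ ∃ u ∈ S, ∃ v ∈ S, w ∈ interval G u v := by
  simp [intervalSet]

lemma mem_intervalSet_image {V W : Type*} {G : SimpleGraph W} {S : Set V} {f : V → W}
    {u v : V} {w : W} (hu : u ∈ S) (hv : v ∈ S) (hw : w ∈ interval G (f u) (f v)) :
    w ∈ intervalSet G (f '' S) :=
  mem_intervalSet_iff.2 ⟨f u, Set.mem_image_of_mem f hu, f v, Set.mem_image_of_mem f hv, hw⟩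

section StrongProd

variable {α β : Type*} {G : SimpleGraph α} {H : SimpleGraph β}

lemma strongProd_edist_le_of_le {x y : α × β} {n : ℕ} (hG : G.edist x.1 y.1 ≤ n)
    (hH : H.edist x.2 y.2 ≤ n) : (strongProd G H).edist x y ≤ n := by
  induction n generalizing x with
  | zero =>
    have hx : x = y := Prod.ext (by simpa using hG) (by simpa using hH)
    simp [hx]
  | succ n ih =>
    obtain ⟨g, hg, hgy⟩ := exists_eq_or_adj_edist_le (by exact_mod_cast hG)
    obtain ⟨h, hh, hhy⟩ := exists_eq_or_adj_edist_le (by exact_mod_cast hH)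
    have hstep : (strongProd G H).edist x (g, h) ≤ 1 := by
      rw [edist_le_one_iff_adj_or_eq]
      by_cases hx : x = (g, h)
      · exact .inr hx
      · exact .inl ⟨hx, hg, hh⟩
    calc (strongProd G H).edist x y
        ≤ (strongProd G H).edist x (g, h) + (strongProd G H).edist (g, h) y :=
          (strongProd G H).edist_triangle
      _ ≤ 1 + n := add_le_add hstep (ih hgy hhy)
      _ = (n + 1 : ℕ) := by push_cast; ring

theorem strongProd_edist (x y : α × β) :
    (strongProd G H).edist x y = max (G.edist x.1 y.1) (H.edist x.2 y.2) := by
  refine le_antisymm ?_ (max_le ?_ ?_)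
  · by_cases htop : max (G.edist x.1 y.1) (H.edist x.2 y.2) = ⊤
    · exact htop ▸ le_top
    obtain ⟨n, hn⟩ := ENat.ne_top_iff_exists.1 htop
    rw [← hn]
    exact strongProd_edist_le_of_le (hn ▸ le_max_left _ _) (hn ▸ le_max_right _ _)
  · exact edist_map_le_of_adj (G := strongProd G H) (f := Prod.fst)
      (fun _ _ hadj => edist_le_one_iff_adj_or_eq.2 hadj.2.1.symm) x y
  · exact edist_map_le_of_adj (G := strongProd G H) (f := Prod.snd)
      (fun _ _ hadj => edist_le_one_iff_adj_or_eq.2 hadj.2.2.symm) x y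

theorem strongProd_dist {x y : α × β} (hG : G.Reachable x.1 y.1) (hH : H.Reachable x.2 y.2) :
    (strongProd G H).dist x y = max (G.dist x.1 y.1) (H.dist x.2 y.2) := by
  have hP : (strongProd G H).Reachable x y := by
    rw [← edist_ne_top_iff_reachable, strongProd_edist]
    exact max_ne_top (edist_ne_top_iff_reachable.2 hG) (edist_ne_top_iff_reachable.2 hH)
  rw [← ENat.natCast_inj, Nat.mono_cast.map_max, hP.coe_dist_eq_edist, hG.coe_dist_eq_edist,
    hH.coe_dist_eq_edist, strongProd_edist]

theorem fst_mem_interval_or_snd_mem_interval (hG : G.Connected) (hH : H.Connected)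
    {u v w : α × β} (hw : w ∈ interval (strongProd G H) u v) :
    w.1 ∈ interval G u.1 v.1 ∨ w.2 ∈ interval H u.2 v.2 := by
  simp only [interval, Set.mem_ofPred_eq, strongProd_dist (hG _ _) (hH _ _)] at hw ⊢
  have := hG.dist_triangle (u := u.1) (v := w.1) (w := v.1)
  have := hH.dist_triangle (u := u.2) (v := w.2) (w := v.2)
  omega

end StrongProd

theorem strongProd_geodetic_projection_general {α β : Type*}
    (G : SimpleGraph α) (H : SimpleGraph β) (hG : G.Connected) (hH : H.Connected)
    (S : Set (α × β)) (hS : IsGeodetic (strongProd G H) S) :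
    IsGeodetic G (Prod.fst '' S) ∨ IsGeodetic H (Prod.snd '' S) := by
  refine or_iff_not_imp_left.2 fun hfst => ?_
  obtain ⟨g, hg⟩ := (Set.ne_univ_iff_exists_notMem _).1 hfst
  refine Set.eq_univ_of_forall fun h => ?_
  obtain ⟨u, hu, v, hv, hgh⟩ := mem_intervalSet_iff.1 (hS ▸ Set.mem_univ (g, h))
  refine mem_intervalSet_image hu hv ?_
  exact (fst_mem_interval_or_snd_mem_interval hG hH hgh).resolve_left
    fun hg' => hg (mem_intervalSet_image hu hv hg')

theorem strongProd_geodetic_projection {α β : Type*} [Fintype α] [Fintype β]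
    (G : SimpleGraph α) (H : SimpleGraph β) (hG : G.Connected) (hH : H.Connected)
    (S : Set (α × β)) (hS : IsGeodetic (strongProd G H) S) :
    IsGeodetic G (Prod.fst '' S) ∨ IsGeodetic H (Prod.snd '' S) :=
  strongProd_geodetic_projection_general G H hG hH S hS
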